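/- arXiv:1612.07635 — 4 statements merged into one kernel-verified Lean document; each statement's English description precedes it below -/
import Mathlib

section
/- Let (X_i) be i.i.d. nonnegative random variables with partial sums S_n. Suppose there exist constants C₀, c > 0 and a nondecreasing function A : [0,∞) → (0,∞) and a positive sequence (a_n) such that sup_{z∈ℝ} P(S_n ∈ (z−h, z]) ≤ C₀ / a_n for all n, and P(X_1 > z) ≥ 2c / A(z) for all z ≥ 0. Then there exists C < ∞ such that for all even n ≥ 2 and all z ≥ 0: P(S_n ∈ (z−h, z]) ≤ (C / a_{n/2}) · e^{−c n / A(z)}. -/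
open MeasureTheory ProbabilityTheory Set
open scoped ENNReal

/-!
Split `S_{2m} = U + V` with `U = X_0 + ⋯ + X_{m-1}` and `V = X_m + ⋯ + X_{2m-1}` independent.
Conditioning on `V = y`, the event `U + V ∈ (z - h, z]` is a window event for `U`, of probability
at most `C₀ / a_m`, and it is empty unless `y ≤ z` because `U ≥ 0`. Hence the probability is at
most `C₀ / a_m · P(V ≤ z)`. Since the `X_i` are nonnegative, `V ≤ z` forces each of its `m`
summands to be `≤ z`, so `P(V ≤ z) ≤ (1 - 2c / A(z))^m ≤ e^{-2cm / A(z)}`.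
-/

lemma ENNReal.one_sub_ofReal_le_ofReal_exp_neg (t : ℝ) :
    1 - ENNReal.ofReal t ≤ ENNReal.ofReal (Real.exp (-t)) := by
  rcases le_total 0 t with ht | ht
  · rw [← ENNReal.ofReal_one, ← ENNReal.ofReal_sub _ ht]
    exact ENNReal.ofReal_le_ofReal (by linarith [Real.add_one_le_exp (-t)])
  · calc 1 - ENNReal.ofReal t ≤ 1 := tsub_le_self
      _ ≤ ENNReal.ofReal (Real.exp (-t)) := ENNReal.one_le_ofReal.2 (Real.one_le_exp (by linarith))

namespace ProbabilityTheory

variable {Ω : Type*} [MeasurableSpace Ω] {μ : Measure Ω}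

lemma measure_le_le_ofReal_exp_neg [IsProbabilityMeasure μ] {Y : Ω → ℝ} (hY : Measurable Y)
    {z t : ℝ} (ht : ENNReal.ofReal t ≤ μ {ω | z < Y ω}) :
    μ {ω | Y ω ≤ z} ≤ ENNReal.ofReal (Real.exp (-t)) :=
  calc μ {ω | Y ω ≤ z} = 1 - μ {ω | z < Y ω} := by
        rw [← prob_compl_eq_one_sub (measurableSet_lt measurable_const hY)]
        simp only [compl_ofPred, not_lt]
    _ ≤ 1 - ENNReal.ofReal t := tsub_le_tsub_left ht 1
    _ ≤ ENNReal.ofReal (Real.exp (-t)) := ENNReal.one_sub_ofReal_le_ofReal_exp_neg t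

lemma iIndepFun.indepFun_finsetSum_finsetSum {ι M : Type*} [AddCommMonoid M] [MeasurableSpace M]
    [MeasurableAdd₂ M] {X : ι → Ω → M} (hX : iIndepFun X μ) (hmeas : ∀ i, Measurable (X i))
    {S T : Finset ι} (hST : Disjoint S T) :
    IndepFun (fun ω ↦ ∑ i ∈ S, X i ω) (fun ω ↦ ∑ i ∈ T, X i ω) μ := by
  have := (hX.indepFun_finset S T hST hmeas).comp
    (Finset.measurable_sum Finset.univ fun i _ ↦ measurable_pi_apply i)
    (Finset.measurable_sum Finset.univ fun i _ ↦ measurable_pi_apply i)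
  convert this using 1 <;> funext ω <;> exact (Finset.sum_coe_sort _ _).symm

lemma iIndepFun.measure_sum_le_le_prod {ι : Type*} {X : ι → Ω → ℝ} (hX : iIndepFun X μ)
    (hnonneg : ∀ i ω, 0 ≤ X i ω) (s : Finset ι) (z : ℝ) :
    μ {ω | ∑ i ∈ s, X i ω ≤ z} ≤ ∏ i ∈ s, μ {ω | X i ω ≤ z} :=
  calc μ {ω | ∑ i ∈ s, X i ω ≤ z} ≤ μ (⋂ i ∈ s, {ω | X i ω ≤ z}) := by
        refine measure_mono fun ω hω ↦ Set.mem_iInter₂.2 fun i hi ↦ ?_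
        exact (Finset.single_le_sum (fun j _ ↦ hnonneg j ω) hi).trans hω
    _ = ∏ i ∈ s, μ {ω | X i ω ≤ z} :=
        hX.meas_biInter fun i _ ↦ ⟨Set.Iic z, measurableSet_Iic, rfl⟩

lemma measure_mem_Ioc_sub_le_indicator {U : Ω → ℝ} (hU_nonneg : ∀ ω, 0 ≤ U ω) {h : ℝ}
    {B : ℝ≥0∞} (hB : ∀ w, μ {ω | U ω ∈ Ioc (w - h) w} ≤ B) (z y : ℝ) :
    μ {ω | U ω ∈ Ioc (z - y - h) (z - y)} ≤ (Iic z).indicator (fun _ ↦ B) y := by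
  by_cases hy : y ≤ z
  · simpa [hy] using hB (z - y)
  · have : {ω | U ω ∈ Ioc (z - y - h) (z - y)} = ∅ :=
      eq_empty_of_forall_notMem fun ω hω ↦ by linarith [hω.2, hU_nonneg ω, not_le.1 hy]
    rw [this, measure_empty]
    exact zero_le

lemma IndepFun.measure_add_mem_Ioc_le [IsFiniteMeasure μ] {U V : Ω → ℝ} (hUV : IndepFun U V μ)
    (hU : Measurable U) (hV : Measurable V) (hU_nonneg : ∀ ω, 0 ≤ U ω) {h : ℝ} {B : ℝ≥0∞}
    (hB : ∀ w, μ {ω | U ω ∈ Ioc (w - h) w} ≤ B) (z : ℝ) :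
    μ {ω | U ω + V ω ∈ Ioc (z - h) z} ≤ B * μ {ω | V ω ≤ z} := by
  set T : Set (ℝ × ℝ) := {p | p.1 + p.2 ∈ Ioc (z - h) z}
  have hT : MeasurableSet T := (measurable_fst.add measurable_snd) measurableSet_Ioc
  have hslice : ∀ y, (fun x ↦ (x, y)) ⁻¹' T = Ioc (z - y - h) (z - y) := fun y ↦ by
    ext x
    simp only [T, mem_preimage, mem_ofPred_eq, mem_Ioc]
    constructor <;> rintro ⟨h₁, h₂⟩ <;> constructor <;> linarith
  calc μ {ω | U ω + V ω ∈ Ioc (z - h) z} = ((μ.map U).prod (μ.map V)) T := by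
        rw [← (indepFun_iff_map_prod_eq_prod_map_map hU.aemeasurable hV.aemeasurable).1 hUV,
          Measure.map_apply (hU.prodMk hV) hT]
        rfl
    _ = ∫⁻ y, μ {ω | U ω ∈ Ioc (z - y - h) (z - y)} ∂(μ.map V) := by
        rw [Measure.prod_apply_symm hT]
        simp_rw [hslice, Measure.map_apply hU measurableSet_Ioc]
        rfl
    _ ≤ ∫⁻ y, (Iic z).indicator (fun _ ↦ B) y ∂(μ.map V) :=
        lintegral_mono (measure_mem_Ioc_sub_le_indicator hU_nonneg hB z)
    _ = B * μ {ω | V ω ≤ z} := by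
        rw [lintegral_indicator_const measurableSet_Iic, Measure.map_apply hV measurableSet_Iic]
        rfl

end ProbabilityTheory

theorem stmt3_general {Ω : Type*} [MeasureSpace Ω] [IsProbabilityMeasure (ℙ : Measure Ω)]
    (X : ℕ → Ω → ℝ) (hmeas : ∀ i, Measurable (X i))
    (hnonneg : ∀ i ω, 0 ≤ X i ω)
    (hindep : iIndepFun X ℙ)
    (hident : ∀ i, Measure.map (X i) ℙ = Measure.map (X 0) ℙ)
    (h : ℝ)
    (C₀ c : ℝ) (hC₀ : 0 < C₀)
    (A : ℝ → ℝ)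
    (a : ℕ → ℝ)
    (hloc : ∀ n : ℕ, ∀ z : ℝ,
      ℙ {ω | (∑ i ∈ Finset.range n, X i ω) ∈ Set.Ioc (z - h) z} ≤ ENNReal.ofReal (C₀ / a n))
    (htail : ∀ z ≥ (0:ℝ), ENNReal.ofReal (2 * c / A z) ≤ ℙ {ω | z < X 0 ω}) :
    ∃ C : ℝ, 0 < C ∧ ∀ m : ℕ, 1 ≤ m → ∀ z ≥ (0:ℝ),
      ℙ {ω | (∑ i ∈ Finset.range (2 * m), X i ω) ∈ Set.Ioc (z - h) z}
        ≤ ENNReal.ofReal ((C / a m) * Real.exp (-(c * (2 * m) / A z))) := by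
  refine ⟨C₀, hC₀, fun m _ z hz ↦ ?_⟩
  set q := Real.exp (-(2 * c / A z))
  have hsplit : ∀ ω, ∑ i ∈ Finset.range (2 * m), X i ω
      = ∑ i ∈ Finset.range m, X i ω + ∑ i ∈ Finset.Ico m (2 * m), X i ω := fun ω ↦
    (Finset.sum_range_add_sum_Ico _ (by omega)).symm
  have hdisj : Disjoint (Finset.range m) (Finset.Ico m (2 * m)) := by
    simp only [Finset.disjoint_left, Finset.mem_range, Finset.mem_Ico]
    omega
  have hfactor : ∀ i, ℙ {ω | X i ω ≤ z} ≤ ENNReal.ofReal q := fun i ↦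
    (IdentDistrib.measure_mem_eq ⟨(hmeas i).aemeasurable, (hmeas 0).aemeasurable, hident i⟩
      measurableSet_Iic).trans_le (measure_le_le_ofReal_exp_neg (hmeas 0) (htail z hz))
  simp_rw [hsplit]
  calc _ ≤ ENNReal.ofReal (C₀ / a m) * ℙ {ω | ∑ i ∈ Finset.Ico m (2 * m), X i ω ≤ z} :=
        (hindep.indepFun_finsetSum_finsetSum hmeas hdisj).measure_add_mem_Ioc_le
          (Finset.measurable_sum _ fun i _ ↦ hmeas i) (Finset.measurable_sum _ fun i _ ↦ hmeas i)
          (fun ω ↦ Finset.sum_nonneg fun i _ ↦ hnonneg i ω) (hloc m) z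
    _ ≤ ENNReal.ofReal (C₀ / a m) * ∏ i ∈ Finset.Ico m (2 * m), ℙ {ω | X i ω ≤ z} := by
        gcongr
        exact hindep.measure_sum_le_le_prod hnonneg _ z
    _ ≤ ENNReal.ofReal (C₀ / a m) * ENNReal.ofReal q ^ m := by
        gcongr
        simpa [show 2 * m - m = m by omega] using
          Finset.prod_le_pow_card (Finset.Ico m (2 * m)) _ _ fun i _ ↦ hfactor i
    _ = ENNReal.ofReal ((C₀ / a m) * Real.exp (-(c * (2 * m) / A z))) := by
        rw [← ENNReal.ofReal_pow (Real.exp_nonneg _), ← ENNReal.ofReal_mul' (by positivity),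
          ← Real.exp_nat_mul]
        ring_nf

/-- For an i.i.d. sequence of nonnegative random variables with partial sums
`S n`, if `sup_z P(S_n ∈ (z-h, z]) ≤ C₀ / a_n` for all `n` and `P(X > z) ≥ 2c / A(z)` for all
`z ≥ 0` (with `A` nondecreasing and positive, `a_n > 0`), then there is `C < ∞` such that for all
even `n = 2m ≥ 2` and `z ≥ 0`: `P(S_n ∈ (z-h, z]) ≤ (C / a_{n/2}) · e^{-c n / A(z)}`. -/
theorem stmt3 {Ω : Type*} [MeasureSpace Ω] [IsProbabilityMeasure (ℙ : Measure Ω)]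
    (X : ℕ → Ω → ℝ) (hmeas : ∀ i, Measurable (X i))
    (hnonneg : ∀ i ω, 0 ≤ X i ω)
    (hindep : iIndepFun X ℙ)
    (hident : ∀ i, Measure.map (X i) ℙ = Measure.map (X 0) ℙ)
    (h : ℝ) (hh : 0 < h)
    (C₀ c : ℝ) (hC₀ : 0 < C₀) (hc : 0 < c)
    (A : ℝ → ℝ) (hA_mono : MonotoneOn A (Set.Ici 0)) (hA_pos : ∀ z ≥ (0:ℝ), 0 < A z)
    (a : ℕ → ℝ) (ha_pos : ∀ n, 0 < a n)
    (hloc : ∀ n : ℕ, ∀ z : ℝ,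
      ℙ {ω | (∑ i ∈ Finset.range n, X i ω) ∈ Set.Ioc (z - h) z} ≤ ENNReal.ofReal (C₀ / a n))
    (htail : ∀ z ≥ (0:ℝ), ENNReal.ofReal (2 * c / A z) ≤ ℙ {ω | z < X 0 ω}) :
    ∃ C : ℝ, 0 < C ∧ ∀ m : ℕ, 1 ≤ m → ∀ z ≥ (0:ℝ),
      ℙ {ω | (∑ i ∈ Finset.range (2 * m), X i ω) ∈ Set.Ioc (z - h) z}
        ≤ ENNReal.ofReal ((C / a m) * Real.exp (-(c * (2 * m) / A z))) :=
  stmt3_general X hmeas hnonneg hindep hident h C₀ c hC₀ A a hloc htail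
end

section
/- Let (X_i) be i.i.d. real random variables with S_n = X_1+...+X_n, and let J ⊆ [0,∞) be a bounded Borel set. For any x ∈ ℝ and y > 0, with M_n = max_{i≤n} X_i and n even: P(S_n ∈ x+J, M_n ≤ y) ≤ 2 · sup_{w∈ℝ} P(S_{n/2} ∈ w+J) · P(S_{n/2} ≥ x/2, M_{n/2} ≤ y). -/
open MeasureTheory ProbabilityTheory Set
open scoped ENNReal NNReal

/-!
On `{S_{2m} ∈ x + J}` we have `S_{2m} ≥ x` because `J ⊆ [0, ∞)`, so one of the two halves
`S_m`, `S_{2m} - S_m` is at least `x / 2`. The halves are independent with the same law `ν`, so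
the swap `(v, w) ↦ (w, v)` preserves their joint law `ν ⊗ ν` and both cases have the same
probability, whence the factor `2`. In the case where the first half is large, integrate over
the first half `v` first: the second half must then land in `(x - S_m) + J`, which has
`ν`-probability at most `sup_w P(S_m ∈ w + J)`.
-/

namespace MeasureTheory.Measure

variable {α β : Type*} [MeasurableSpace α] [MeasurableSpace β]

theorem prod_apply_le_mul_of_section_le {μ : Measure α} {ν : Measure β} {C : Set (α × β)}
    (hC : MeasurableSet C) {B : Set α} (hB : MeasurableSet B) (hCB : ∀ p ∈ C, p.1 ∈ B)
    {K : ℝ≥0∞} (hK : ∀ a ∈ B, ν (Prod.mk a ⁻¹' C) ≤ K) :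
    μ.prod ν C ≤ K * μ B := by
  have hslice (a : α) : ν (Prod.mk a ⁻¹' C) ≤ B.indicator (fun _ ↦ K) a := by
    by_cases ha : a ∈ B
    · simpa [ha] using hK a ha
    · have : Prod.mk a ⁻¹' C = ∅ := eq_empty_of_forall_notMem fun b hb ↦ ha (hCB _ hb)
      simp [this]
  calc μ.prod ν C ≤ ∫⁻ a, ν (Prod.mk a ⁻¹' C) ∂μ := prod_apply_le hC
    _ ≤ ∫⁻ a, B.indicator (fun _ ↦ K) a ∂μ := lintegral_mono hslice
    _ = K * μ B := lintegral_indicator_const hB K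

end MeasureTheory.Measure

section SplitSums

variable {β : Type*} [MeasurableSpace β] {ν : Measure β} {s : β → ℝ} {G : Set β} {J : Set ℝ}

theorem prod_fst_ge_half_le (hs : Measurable s) (hG : MeasurableSet G) (hJ : MeasurableSet J)
    (x : ℝ) :
    (ν.prod ν) {p | x / 2 ≤ s p.1 ∧ p.1 ∈ G ∧ s p.1 + s p.2 - x ∈ J}
      ≤ (⨆ w : ℝ, ν {b | s b - w ∈ J}) * ν {a | x / 2 ≤ s a ∧ a ∈ G} := by
  refine Measure.prod_apply_le_mul_of_section_le (B := {a | x / 2 ≤ s a ∧ a ∈ G}) ?_ ?_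
    (fun p hp ↦ ⟨hp.1, hp.2.1⟩) fun a _ ↦ ?_
  · exact (measurableSet_le measurable_const (hs.comp measurable_fst)).inter
      ((measurable_fst hG).inter
        (((hs.comp measurable_fst).add (hs.comp measurable_snd)).sub_const x hJ))
  · exact (measurableSet_le measurable_const hs).inter hG
  · refine (measure_mono fun b hb ↦ ?_).trans (le_iSup (fun w ↦ ν {b | s b - w ∈ J}) (x - s a))
    simpa [sub_sub_eq_add_sub, add_comm] using hb.2.2

theorem prod_add_sub_mem_le_two_mul [SFinite ν] (hs : Measurable s) (hG : MeasurableSet G)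
    (hJ : MeasurableSet J) (hJpos : J ⊆ Ici 0) (x : ℝ) :
    (ν.prod ν) {p | s p.1 + s p.2 - x ∈ J ∧ p.1 ∈ G ∧ p.2 ∈ G}
      ≤ 2 * (⨆ w : ℝ, ν {b | s b - w ∈ J}) * ν {a | x / 2 ≤ s a ∧ a ∈ G} := by
  set C := {p : β × β | x / 2 ≤ s p.1 ∧ p.1 ∈ G ∧ s p.1 + s p.2 - x ∈ J}
  have hsub : {p : β × β | s p.1 + s p.2 - x ∈ J ∧ p.1 ∈ G ∧ p.2 ∈ G} ⊆ C ∪ Prod.swap ⁻¹' C := by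
    rintro ⟨a, b⟩ ⟨hJab, ha, hb⟩
    have : x ≤ s a + s b := by linarith [mem_Ici.mp (hJpos hJab)]
    rcases le_or_gt (x / 2) (s a) with hxa | hxa
    · exact Or.inl ⟨hxa, ha, hJab⟩
    · exact Or.inr ⟨show x / 2 ≤ s b by linarith, hb, show s b + s a - x ∈ J by rwa [add_comm]⟩
  have hswap : (ν.prod ν) (Prod.swap ⁻¹' C) = (ν.prod ν) C :=
    Measure.measurePreserving_swap.measure_preimage_equiv (f := MeasurableEquiv.prodComm) C
  calc (ν.prod ν) {p | s p.1 + s p.2 - x ∈ J ∧ p.1 ∈ G ∧ p.2 ∈ G}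
      ≤ (ν.prod ν) C + (ν.prod ν) (Prod.swap ⁻¹' C) :=
        (measure_mono hsub).trans (measure_union_le _ _)
    _ = 2 * (ν.prod ν) C := by rw [hswap, two_mul]
    _ ≤ 2 * ((⨆ w : ℝ, ν {b | s b - w ∈ J}) * ν {a | x / 2 ≤ s a ∧ a ∈ G}) := by
        gcongr; exact prod_fst_ge_half_le hs hG hJ x
    _ = _ := (mul_assoc _ _ _).symm

end SplitSums

namespace ProbabilityTheory.iIndepFun

variable {Ω E : Type*} [MeasurableSpace Ω] [MeasurableSpace E] {μ : Measure Ω} {ν : Measure E}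

theorem map_comp_eq_pi {κ ι : Type*} [Fintype ι] {X : κ → Ω → E}
    (hmeas : ∀ i, Measurable (X i)) (hindep : iIndepFun X μ) (hident : ∀ i, μ.map (X i) = ν)
    {g : ι → κ} (hg : g.Injective) :
    μ.map (fun ω i ↦ X (g i) ω) = Measure.pi fun _ : ι ↦ ν := by
  rw [(hindep.precomp hg).map_fun_eq_pi_map fun i ↦ (hmeas (g i)).aemeasurable]
  simp only [hident]

theorem map_halves_eq_prod {X : ℕ → Ω → E} (hmeas : ∀ i, Measurable (X i))
    (hindep : iIndepFun X μ) (hident : ∀ i, μ.map (X i) = ν) (m : ℕ) :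
    μ.map (fun ω ↦ ((fun i : Fin m ↦ X i ω), fun i : Fin m ↦ X (m + i) ω))
      = (Measure.pi fun _ ↦ ν).prod (Measure.pi fun _ ↦ ν) := by
  have hg : (Sum.elim (fun i : Fin m ↦ (i : ℕ)) fun i : Fin m ↦ m + (i : ℕ)).Injective :=
    Fin.val_injective.sumElim (fun _ _ h ↦ Fin.ext (by simpa using h)) fun a _ ↦ by
      have := a.isLt; omega
  have hpi := map_comp_eq_pi hmeas hindep hident hg
  have := hindep.isProbabilityMeasure
  have : IsProbabilityMeasure ν :=
    hident 0 ▸ Measure.isProbabilityMeasure_map (hmeas 0).aemeasurable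
  have hsplit := (measurePreserving_sumPiEquivProdPi (X := fun _ : Fin m ⊕ Fin m ↦ E)
    fun _ ↦ ν).map_eq
  rw [← hsplit, ← hpi,
    Measure.map_map (MeasurableEquiv.measurable _) (measurable_pi_lambda _ fun i ↦ hmeas _)]
  rfl

end ProbabilityTheory.iIndepFun

theorem stmt5_general {Ω : Type*} [MeasureSpace Ω] [IsProbabilityMeasure (ℙ : Measure Ω)]
    (X : ℕ → Ω → ℝ) (hmeas : ∀ i, Measurable (X i))
    (hindep : iIndepFun (m := fun _ => Real.measurableSpace) X ℙ)
    (hident : ∀ i, Measure.map (X i) ℙ = Measure.map (X 0) ℙ)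
    (J : Set ℝ) (hJ : MeasurableSet J)
    (hJpos : J ⊆ Set.Ici 0) (x : ℝ) (y : ℝ) (m : ℕ) :
    ℙ {ω | (∑ i ∈ Finset.range (2 * m), X i ω) - x ∈ J ∧ ∀ i < 2 * m, X i ω ≤ y}
      ≤ 2 * (⨆ w : ℝ, ℙ {ω | (∑ i ∈ Finset.range m, X i ω) - w ∈ J})
          * ℙ {ω | x / 2 ≤ (∑ i ∈ Finset.range m, X i ω) ∧ ∀ i < m, X i ω ≤ y} := by
  set ν := Measure.pi fun _ : Fin m ↦ Measure.map (X 0) ℙ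
  have hV : Measure.map (fun ω (i : Fin m) ↦ X i ω) ℙ = ν :=
    hindep.map_comp_eq_pi hmeas hident Fin.val_injective
  set G := {v : Fin m → ℝ | ∀ i, v i ≤ y}
  have hVmeas : Measurable fun ω (i : Fin m) ↦ X i ω := measurable_pi_lambda _ fun i ↦ hmeas i
  have hsum : Measurable fun v : Fin m → ℝ ↦ ∑ i, v i := by fun_prop
  have hG : MeasurableSet G := by measurability
  have hsub : {ω | (∑ i ∈ Finset.range (2 * m), X i ω) - x ∈ J ∧ ∀ i < 2 * m, X i ω ≤ y} ⊆
      (fun ω ↦ ((fun i : Fin m ↦ X i ω), fun i : Fin m ↦ X (m + i) ω)) ⁻¹'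
        {p | ∑ i, p.1 i + ∑ i, p.2 i - x ∈ J ∧ p.1 ∈ G ∧ p.2 ∈ G} := by
    rintro ω ⟨hmem, hle⟩
    refine ⟨?_, fun i ↦ hle i (by omega), fun i ↦ hle (m + i) (by omega)⟩
    simpa [Fin.sum_univ_eq_sum_range (X · ω), Fin.sum_univ_eq_sum_range (fun i ↦ X (m + i) ω),
      two_mul, Finset.sum_range_add] using hmem
  calc _ ≤ Measure.map (fun ω ↦ ((fun i : Fin m ↦ X i ω), fun i : Fin m ↦ X (m + i) ω)) ℙ
        {p | ∑ i, p.1 i + ∑ i, p.2 i - x ∈ J ∧ p.1 ∈ G ∧ p.2 ∈ G} :=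
        (measure_mono hsub).trans (Measure.le_map_apply (by fun_prop) _)
    _ ≤ 2 * (⨆ w : ℝ, ν {b | ∑ i, b i - w ∈ J}) * ν {a | x / 2 ≤ ∑ i, a i ∧ a ∈ G} := by
        rw [hindep.map_halves_eq_prod hmeas hident]
        exact prod_add_sub_mem_le_two_mul hsum hG hJ hJpos x
    _ = _ := by
        rw [← hV]
        congr 2
        · refine iSup_congr fun w ↦ ?_
          rw [Measure.map_apply hVmeas]
          · simp [Finset.sum_range]
          · exact hsum.sub_const w hJ
        · rw [Measure.map_apply hVmeas]
          · simp [Finset.sum_range, G, Fin.forall_iff]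
          · exact (measurableSet_le measurable_const hsum).inter hG

/-- For i.i.d. `X`, partial sums `S`, bounded Borel `J ⊆ [0,∞)`, `x : ℝ`,
`y > 0` and `n = 2m` even:
`P(S_n ∈ x+J, M_n ≤ y) ≤ 2 · sup_w P(S_{n/2} ∈ w+J) · P(S_{n/2} ≥ x/2, M_{n/2} ≤ y)`. -/
theorem stmt5 {Ω : Type*} [MeasureSpace Ω] [IsProbabilityMeasure (ℙ : Measure Ω)]
    (X : ℕ → Ω → ℝ) (hmeas : ∀ i, Measurable (X i))
    (hindep : iIndepFun (m := fun _ => Real.measurableSpace) X ℙ)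
    (hident : ∀ i, Measure.map (X i) ℙ = Measure.map (X 0) ℙ)
    (J : Set ℝ) (hJ : MeasurableSet J) (hJbdd : Bornology.IsBounded J)
    (hJpos : J ⊆ Set.Ici 0) (x : ℝ) (y : ℝ) (hy : 0 < y) (m : ℕ) :
    ℙ {ω | (∑ i ∈ Finset.range (2 * m), X i ω) - x ∈ J ∧ ∀ i < 2 * m, X i ω ≤ y}
      ≤ 2 * (⨆ w : ℝ, ℙ {ω | (∑ i ∈ Finset.range m, X i ω) - w ∈ J})
          * ℙ {ω | x / 2 ≤ (∑ i ∈ Finset.range m, X i ω) ∧ ∀ i < m, X i ω ≤ y} :=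
  stmt5_general X hmeas hindep hident J hJ hJpos x y m
end

section
/- Fix α ∈ (0,1) and let A(x) = x^α. Let (x_n) and (ε_n) be positive sequences with x_n → ∞ and ε_n → 0. Then there exists a probability measure F on (0,∞) such that: (i) x^α · F((x,∞)) → 0 as x → ∞, and (ii) F({x_n}) ≥ 2 ε_n / x_n^α for infinitely many n. -/
open MeasureTheory Filter Set Real
open scoped ENNReal Topology

/-! Pass to a subsequence `y k = x (φ k)` along which both `2 ε` and `2 ε / x ^ α` are below
`2⁻¹ ^ (k + 1)`, put mass `2 ε (φ k) / y k ^ α` at `y k` and the missing mass at `1`.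
Since `y k ^ α` times the mass at `y k` is at most `2⁻¹ ^ (k + 1)`, for `t ≥ 1` the quantity
`t ^ α F((t, ∞))` is bounded by the mass that the finite measure `∑ 2⁻¹ ^ (k + 1) δ_{y k}` gives
to `(t, ∞)`, and this tends to `0`. -/

theorem tendsto_measure_Ioi_atTop_zero {X : Type*} [Nonempty X] [LinearOrder X]
    [TopologicalSpace X] [ClosedIicTopology X] [IsCountablyGenerated (atTop : Filter X)]
    [MeasurableSpace X] [OpensMeasurableSpace X] (μ : Measure X) [IsFiniteMeasure μ] :
    Tendsto (fun t => μ (Ioi t)) atTop (𝓝 0) := by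
  have hempty : ⋂ t : X, Ioi t = ∅ :=
    eq_empty_of_forall_notMem fun a ha => lt_irrefl a (mem_iInter.1 ha a)
  have hIoi := tendsto_measure_iInter_atTop (μ := μ)
    (fun _ => measurableSet_Ioi.nullMeasurableSet) antitone_Ioi
    ⟨Classical.arbitrary X, measure_ne_top μ _⟩
  rwa [hempty, measure_empty] at hIoi

theorem isProbabilityMeasure_add_smul_dirac {X : Type*} [MeasurableSpace X] (μ : Measure X)
    (hμ : μ univ ≤ 1) (a : X) : IsProbabilityMeasure (μ + (1 - μ univ) • Measure.dirac a) := by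
  rw [isProbabilityMeasure_iff, Measure.add_apply, Measure.smul_apply,
    measure_univ (μ := Measure.dirac a), smul_eq_mul, mul_one, add_tsub_cancel_of_le hμ]

section PointMasses

variable {X : Type*} [MeasurableSpace X] (y : ℕ → X) (p : ℕ → ℝ≥0∞)

noncomputable def pointMasses : Measure X :=
  Measure.sum fun k => p k • Measure.dirac (y k)

variable {y p}

theorem pointMasses_apply {s : Set X} (hs : MeasurableSet s) :
    pointMasses y p s = ∑' k, p k * s.indicator 1 (y k) := by
  simp only [pointMasses, Measure.sum_apply _ hs, Measure.smul_apply, Measure.dirac_apply' _ hs,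
    smul_eq_mul]

theorem pointMasses_univ : pointMasses y p univ = ∑' k, p k := by
  simp [pointMasses_apply MeasurableSet.univ]

theorem le_pointMasses_apply {s : Set X} (hs : MeasurableSet s) {k : ℕ} (hk : y k ∈ s) :
    p k ≤ pointMasses y p s := by
  rw [pointMasses_apply hs]
  simpa [indicator_of_mem hk] using
    ENNReal.le_tsum (f := fun j => p j * s.indicator 1 (y j)) k

theorem pointMasses_apply_eq_zero {s : Set X} (hs : MeasurableSet s) (h : ∀ k, y k ∉ s) :
    pointMasses y p s = 0 := by
  simp [pointMasses_apply hs, indicator_of_notMem (h _)]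

theorem mul_pointMasses_le {q : ℕ → ℝ≥0∞} {s : Set X} (hs : MeasurableSet s) {c : ℝ≥0∞}
    (h : ∀ k, y k ∈ s → c * p k ≤ q k) : c * pointMasses y p s ≤ pointMasses y q s := by
  rw [pointMasses_apply hs, pointMasses_apply hs, ← ENNReal.tsum_mul_left]
  refine ENNReal.tsum_le_tsum fun k => ?_
  by_cases hk : y k ∈ s
  · simpa [indicator_of_mem hk] using h k hk
  · simp [indicator_of_notMem hk]

end PointMasses

theorem tendsto_rpow_mul_pointMasses_Ioi {α : ℝ} (hα : 0 ≤ α) {y : ℕ → ℝ} {p q : ℕ → ℝ≥0∞}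
    (hpq : ∀ k, ENNReal.ofReal (y k ^ α) * p k ≤ q k) (hq : ∑' k, q k ≠ ∞) :
    Tendsto (fun t : ℝ => t ^ α * (pointMasses y p (Ioi t)).toReal) atTop (𝓝 0) := by
  have : IsFiniteMeasure (pointMasses y q) := ⟨by rwa [pointMasses_univ, lt_top_iff_ne_top]⟩
  have hbound : ∀ t, 0 ≤ t →
      ENNReal.ofReal (t ^ α) * pointMasses y p (Ioi t) ≤ pointMasses y q (Ioi t) :=
    fun t ht => mul_pointMasses_le measurableSet_Ioi fun k hk =>
      (mul_le_mul_left (ENNReal.ofReal_le_ofReal (rpow_le_rpow ht hk.le hα)) _).trans (hpq k)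
  have hlim : Tendsto (fun t : ℝ => ENNReal.ofReal (t ^ α) * pointMasses y p (Ioi t)) atTop
      (𝓝 0) :=
    tendsto_of_tendsto_of_tendsto_of_le_of_le' tendsto_const_nhds
      (tendsto_measure_Ioi_atTop_zero _) (Eventually.of_forall fun _ => zero_le)
      ((eventually_ge_atTop 0).mono hbound)
  refine ((ENNReal.tendsto_toReal ENNReal.zero_ne_top).comp hlim).congr' ?_
  filter_upwards [eventually_ge_atTop 0] with t ht
  simp [ENNReal.toReal_mul, ENNReal.toReal_ofReal (rpow_nonneg ht α)]

theorem exists_strictMono_subseq_ofReal_lt {α : ℝ} (hα : 0 < α) {x ε : ℕ → ℝ}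
    (hx : Tendsto x atTop atTop) (hε : Tendsto ε atTop (𝓝 0)) {u : ℕ → ℝ≥0∞}
    (hu : ∀ k, 0 < u k) :
    ∃ φ : ℕ → ℕ, StrictMono φ ∧ ∀ k, 0 < x (φ k) ∧ ENNReal.ofReal (ε (φ k)) < u k ∧
      ENNReal.ofReal (ε (φ k) / x (φ k) ^ α) < u k := by
  have hε' : Tendsto (fun n => ENNReal.ofReal (ε n)) atTop (𝓝 0) := by
    simpa using ENNReal.tendsto_ofReal hε
  have hratio : Tendsto (fun n => ENNReal.ofReal (ε n / x n ^ α)) atTop (𝓝 0) := by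
    simpa using ENNReal.tendsto_ofReal (hε.div_atTop ((tendsto_rpow_atTop hα).comp hx))
  exact extraction_forall_of_eventually fun k => (hx.eventually_gt_atTop 0).and <|
    (hε'.eventually_lt_const (hu k)).and (hratio.eventually_lt_const (hu k))

theorem stmt14_general (α : ℝ) (hα0 : 0 < α) (x ε : ℕ → ℝ)
    (hx : Tendsto x atTop atTop) (hε : Tendsto ε atTop (𝓝 0)) :
    ∃ F : Measure ℝ, IsProbabilityMeasure F ∧ F (Set.Iic 0) = 0 ∧
      Tendsto (fun t : ℝ => t ^ α * (F (Set.Ioi t)).toReal) atTop (𝓝 0) ∧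
      {n : ℕ | 2 * ε n / (x n) ^ α ≤ (F {x n}).toReal}.Infinite := by
  set q : ℕ → ℝ≥0∞ := fun k => 2⁻¹ ^ (k + 1)
  have hq_pos (k : ℕ) : 0 < q k := ENNReal.pow_pos (ENNReal.inv_pos.2 ENNReal.ofNat_ne_top) _
  have hq : ∑' k, q k = 1 := by
    simp [q, ENNReal.tsum_geometric_add_one, ENNReal.inv_mul_cancel]
  obtain ⟨φ, hφ, hφk⟩ := exists_strictMono_subseq_ofReal_lt hα0 hx
    (by simpa using hε.const_mul 2) hq_pos
  set y := fun k => x (φ k)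
  set p := fun k => ENNReal.ofReal (2 * ε (φ k) / y k ^ α)
  have hpq (k : ℕ) : ENNReal.ofReal (y k ^ α) * p k ≤ q k := by
    rw [← ENNReal.ofReal_mul (rpow_nonneg (hφk k).1.le α),
      mul_div_cancel₀ _ (rpow_pos_of_pos (hφk k).1 α).ne']
    exact (hφk k).2.1.le
  have hp : pointMasses y p univ ≤ 1 := by
    rw [pointMasses_univ, ← hq]
    exact ENNReal.tsum_le_tsum fun k => (hφk k).2.2.le
  set F := pointMasses y p + (1 - pointMasses y p univ) • Measure.dirac 1
  have hF : IsProbabilityMeasure F := isProbabilityMeasure_add_smul_dirac _ hp 1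
  refine ⟨F, hF, ?_, ?_, ?_⟩
  · rw [Measure.add_apply, pointMasses_apply_eq_zero measurableSet_Iic
      fun k => not_le.2 (hφk k).1]
    simp [Measure.dirac_apply' _ measurableSet_Iic]
  · refine (tendsto_rpow_mul_pointMasses_Ioi hα0.le hpq (by simp [hq])).congr' ?_
    filter_upwards [eventually_ge_atTop 1] with t ht
    have hFt : F (Ioi t) = pointMasses y p (Ioi t) := by
      simp [F, Measure.dirac_apply' _ measurableSet_Ioi, not_lt.2 ht]
    rw [hFt]
  · refine infinite_of_injective_forall_mem hφ.injective fun k => ?_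
    rw [mem_ofPred_eq, ← ENNReal.ofReal_le_iff_le_toReal (measure_ne_top _ _)]
    exact (le_pointMasses_apply (measurableSet_singleton _) rfl).trans
      (Measure.le_add_right le_rfl _)

/-- For `α ∈ (0,1)` and positive sequences `x_n → ∞`, `ε_n → 0`, there is a
probability measure `F` on `(0,∞)` with `x^α F((x,∞)) → 0` as `x → ∞` and
`F({x_n}) ≥ 2 ε_n / x_n^α` for infinitely many `n`. -/
theorem stmt14 (α : ℝ) (hα0 : 0 < α) (hα1 : α < 1)
    (x ε : ℕ → ℝ) (hx_pos : ∀ n, 0 < x n) (hε_pos : ∀ n, 0 < ε n)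
    (hx : Tendsto x atTop atTop) (hε : Tendsto ε atTop (𝓝 0)) :
    ∃ F : Measure ℝ, IsProbabilityMeasure F ∧ F (Set.Iic 0) = 0 ∧
      Tendsto (fun t : ℝ => t ^ α * (F (Set.Ioi t)).toReal) atTop (𝓝 0) ∧
      {n : ℕ | 2 * ε n / (x n) ^ α ≤ (F {x n}).toReal}.Infinite :=
  stmt14_general α hα0 x ε hx hε
end

section
/- Let F and G be finite Borel measures on ℝ, let 0 ≤ a₁ < a₂ ≤ ∞, γ ∈ (0,1), and set γ₁ = 1 − (2−γ)^{−1}, γ₂ = γ^{−1} − 1, γ̄ = 1 − γ. Then for all measurable f, g : ℝ → [0,∞) and all x ≥ 0: ∫_{y ∈ (a₁x, a₂x)} f(y) (∫_{|z| ≤ γ̄ y} g(z) G(−y + dz)) F(x + dy) ≤ ∫_{w ∈ (γ a₁ x, (2−γ) a₂ x)} (∫_{−γ₁ w ≤ v ≤ γ₂ w} f(w+v) g(v) F(x + w + dv)) G(−dw). -/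
/-!
Write `y = u − x` for the `F`-variable and `w = y − z` for the `G`-variable. The constraint
`|z| ≤ (1 − γ) y` confines `w` to `[γ y, (2 − γ) y]`, equivalently `y` to `[w / (2 − γ), w / γ]`,
which is the window `−γ₁ w ≤ y − w ≤ γ₂ w`; it also maps `(a₁ x, a₂ x)` into
`(γ a₁ x, (2 − γ) a₂ x)`. So the region of integration on the left lies inside the one on the
right, and Tonelli's theorem swaps the order of integration.
-/

open MeasureTheory Set
open scoped ENNReal

section FiberwiseRegion

variable {α β : Type*} [MeasurableSpace α] [MeasurableSpace β] {μ : Measure α} {ν : Measure β}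

theorem setLIntegral_setLIntegral_eq_lintegral_lintegral_indicator {A : Set α} {S : α → Set β}
    (hA : MeasurableSet A) (hS : ∀ u, MeasurableSet (S u)) (φ : α × β → ℝ≥0∞) :
    ∫⁻ u in A, ∫⁻ v in S u, φ (u, v) ∂ν ∂μ
      = ∫⁻ u, ∫⁻ v, {p : α × β | p.1 ∈ A ∧ p.2 ∈ S p.1}.indicator φ (u, v) ∂ν ∂μ := by
  rw [← lintegral_indicator hA]
  refine lintegral_congr fun u => ?_
  by_cases hu : u ∈ A
  · rw [indicator_of_mem hu, ← lintegral_indicator (hS u)]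
    congr 1 with v
    by_cases hv : v ∈ S u <;> simp [hu, hv]
  · simp [hu]

theorem setLIntegral_setLIntegral_le_swap [SFinite μ] [SFinite ν]
    {A : Set α} {S : α → Set β} {B : Set β} {C : β → Set α}
    (hA : MeasurableSet A) (hS : ∀ u, MeasurableSet (S u))
    (hAS : MeasurableSet {p : α × β | p.1 ∈ A ∧ p.2 ∈ S p.1})
    (hB : MeasurableSet B) (hC : ∀ v, MeasurableSet (C v))
    {φ : α × β → ℝ≥0∞} (hφ : Measurable φ)
    (hsub : ∀ u ∈ A, ∀ v ∈ S u, v ∈ B ∧ u ∈ C v) :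
    ∫⁻ u in A, ∫⁻ v in S u, φ (u, v) ∂ν ∂μ ≤ ∫⁻ v in B, ∫⁻ u in C v, φ (u, v) ∂μ ∂ν := by
  calc ∫⁻ u in A, ∫⁻ v in S u, φ (u, v) ∂ν ∂μ
      = ∫⁻ v, ∫⁻ u, {p : α × β | p.1 ∈ A ∧ p.2 ∈ S p.1}.indicator φ (u, v) ∂μ ∂ν := by
        rw [setLIntegral_setLIntegral_eq_lintegral_lintegral_indicator hA hS]
        exact lintegral_lintegral_swap (hφ.indicator hAS).aemeasurable
    _ ≤ ∫⁻ v, ∫⁻ u, {q : β × α | q.1 ∈ B ∧ q.2 ∈ C q.1}.indicator (φ ∘ Prod.swap) (v, u) ∂μ ∂ν :=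
        lintegral_mono fun v => lintegral_mono fun u =>
          indicator_le_indicator_of_subset (t := {p : α × β | p.2 ∈ B ∧ p.1 ∈ C p.2})
            (fun p hp => hsub p.1 hp.1 p.2 hp.2) (fun _ => zero_le) (u, v)
    _ = ∫⁻ v in B, ∫⁻ u in C v, φ (u, v) ∂μ ∂ν :=
        (setLIntegral_setLIntegral_eq_lintegral_lintegral_indicator hB hC _).symm

end FiberwiseRegion

theorem ENNReal.ofReal_lt_ofReal_mul_of_le_mul {c y w : ℝ} {b : ℝ≥0∞} (hc : 0 < c)
    (hw : w ≤ c * y) (hy : ENNReal.ofReal y < b) : ENNReal.ofReal w < ENNReal.ofReal c * b :=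
  calc ENNReal.ofReal w ≤ ENNReal.ofReal c * ENNReal.ofReal y := by
        rw [← ENNReal.ofReal_mul hc.le]; exact ENNReal.ofReal_le_ofReal hw
    _ < ENNReal.ofReal c * b :=
        (ENNReal.mul_lt_mul_iff_right (ENNReal.ofReal_pos.mpr hc).ne' ENNReal.ofReal_ne_top).mpr hy

theorem sub_mem_Icc_of_mem_Icc_mul {γ y w : ℝ} (hγ0 : 0 < γ) (hγ1 : γ < 1)
    (hw : w ∈ Icc (γ * y) ((2 - γ) * y)) :
    y - w ∈ Icc (-((1 - (2 - γ)⁻¹) * w)) ((γ⁻¹ - 1) * w) := by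
  have h2γ : 0 < 2 - γ := by linarith
  constructor
  · have : w * (2 - γ)⁻¹ ≤ y := by rw [← div_eq_mul_inv, div_le_iff₀ h2γ]; linarith [hw.2]
    linarith
  · have : y ≤ w * γ⁻¹ := by rw [← div_eq_mul_inv, le_div_iff₀ hγ0]; linarith [hw.1]
    linarith

/-- `∫ φ(y) F(x+dy)` is `∫ φ(u − x) dF(u)`, `∫ φ(z) G(−y+dz)` is `∫ φ(v + y) dG(v)` and
`∫ ψ(w) G(−dw)` is `∫ ψ(−u) dG(u)`; `a₂` lives in `ℝ≥0∞` so that `a₂ = ∞` is allowed. -/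
theorem stmt16_general (F G : Measure ℝ) [IsFiniteMeasure F] [IsFiniteMeasure G]
    (a₁ : ℝ) (a₂ : ℝ≥0∞)
    (γ : ℝ) (hγ0 : 0 < γ) (hγ1 : γ < 1)
    (f g : ℝ → ℝ) (hf : Measurable f) (hg : Measurable g)
    (x : ℝ) :
    ∫⁻ u in {u : ℝ | a₁ * x < u - x ∧ ENNReal.ofReal (u - x) < a₂ * ENNReal.ofReal x},
        ENNReal.ofReal (f (u - x)) *
          ∫⁻ v in {v : ℝ | |v + (u - x)| ≤ (1 - γ) * (u - x)},
            ENNReal.ofReal (g (v + (u - x))) ∂G ∂F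
      ≤ ∫⁻ u in {u : ℝ | γ * a₁ * x < -u ∧
            ENNReal.ofReal (-u) < ENNReal.ofReal (2 - γ) * a₂ * ENNReal.ofReal x},
          (∫⁻ s in {s : ℝ | -((1 - (2 - γ)⁻¹) * (-u)) ≤ s - x - (-u) ∧
              s - x - (-u) ≤ (γ⁻¹ - 1) * (-u)},
            ENNReal.ofReal (f (s - x)) * ENNReal.ofReal (g (s - x - (-u))) ∂F) ∂G := by
  have h2γ : 0 < 2 - γ := by linarith
  refine (lintegral_congr fun u => ?_).trans_le (setLIntegral_setLIntegral_le_swap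
    (S := fun u => {v | |v + (u - x)| ≤ (1 - γ) * (u - x)})
    (φ := fun p => ENNReal.ofReal (f (p.1 - x)) * ENNReal.ofReal (g (p.1 - x - -p.2)))
    (by measurability) (fun _ => by measurability) (by measurability) (by measurability)
    (fun _ => by measurability) (by fun_prop) ?_)
  · rw [← lintegral_const_mul' _ _ ENNReal.ofReal_ne_top]
    simp_rw [sub_neg_eq_add, add_comm (u - x)]
  rintro u ⟨hxu, hux⟩ v (hv : |v + (u - x)| ≤ (1 - γ) * (u - x))
  have hw : -v ∈ Icc (γ * (u - x)) ((2 - γ) * (u - x)) := by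
    obtain ⟨h₁, h₂⟩ := abs_le.mp hv
    constructor <;> linarith
  refine ⟨⟨?_, ?_⟩, sub_mem_Icc_of_mem_Icc_mul hγ0 hγ1 hw⟩
  · calc γ * a₁ * x = γ * (a₁ * x) := mul_assoc _ _ _
      _ < γ * (u - x) := mul_lt_mul_of_pos_left hxu hγ0
      _ ≤ -v := hw.1
  · rw [mul_assoc]
    exact ENNReal.ofReal_lt_ofReal_mul_of_le_mul h2γ hw.2 hux

/-- The change-of-variables/Fubini inequality (8.1). Here, for a measure `F`,
`∫ φ(y) F(x+dy) := ∫ φ(u−x) F(du)`, `∫ φ(z) G(−y+dz) := ∫ φ(u+y) G(du)` and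
`∫ ψ(w) G(−dw) := ∫ ψ(−u) G(du)`. With `γ₁ = 1−(2−γ)⁻¹`, `γ₂ = γ⁻¹−1`, `γ̄ = 1−γ`,
and `a₂ ∈ (a₁, ∞]` formalized as `a₂ : ℝ≥0∞`:
`∫_{y∈(a₁x,a₂x)} f(y) (∫_{|z|≤γ̄y} g(z) G(−y+dz)) F(x+dy)
  ≤ ∫_{w∈(γa₁x,(2−γ)a₂x)} (∫_{−γ₁w≤v≤γ₂w} f(w+v) g(v) F(x+w+dv)) G(−dw)`. -/
theorem stmt16 (F G : Measure ℝ) [IsFiniteMeasure F] [IsFiniteMeasure G]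
    (a₁ : ℝ) (ha₁ : 0 ≤ a₁) (a₂ : ℝ≥0∞) (ha₂ : ENNReal.ofReal a₁ < a₂)
    (γ : ℝ) (hγ0 : 0 < γ) (hγ1 : γ < 1)
    (f g : ℝ → ℝ) (hf : Measurable f) (hg : Measurable g)
    (hf0 : ∀ t, 0 ≤ f t) (hg0 : ∀ t, 0 ≤ g t) (x : ℝ) (hx : 0 ≤ x) :
    ∫⁻ u in {u : ℝ | a₁ * x < u - x ∧ ENNReal.ofReal (u - x) < a₂ * ENNReal.ofReal x},
        ENNReal.ofReal (f (u - x)) *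
          ∫⁻ v in {v : ℝ | |v + (u - x)| ≤ (1 - γ) * (u - x)},
            ENNReal.ofReal (g (v + (u - x))) ∂G ∂F
      ≤ ∫⁻ u in {u : ℝ | γ * a₁ * x < -u ∧
            ENNReal.ofReal (-u) < ENNReal.ofReal (2 - γ) * a₂ * ENNReal.ofReal x},
          (∫⁻ s in {s : ℝ | -((1 - (2 - γ)⁻¹) * (-u)) ≤ s - x - (-u) ∧
              s - x - (-u) ≤ (γ⁻¹ - 1) * (-u)},
            ENNReal.ofReal (f (s - x)) * ENNReal.ofReal (g (s - x - (-u))) ∂F) ∂G :=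
  stmt16_general F G a₁ a₂ γ hγ0 hγ1 f g hf hg x
end
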